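/- arXiv:2412.10024 — 3 statements merged into one kernel-verified Lean document; each statement's English description precedes it below -/
import Mathlib

section
/- In the discrimination setting, fix δ ∈ (0,1), let p̂(δ) := δ·(1/√(1+3δ²) − 1/2) and let τ̄₂(δ) := max{(1−3δ)/2, 0} be the unchecked politician's allocation to group 2. Then welfare with the equality-restoring advisor strictly exceeds welfare under unchecked discrimination: W(p̂(δ), δ) > ω(τ̄₂(δ), δ). -/
noncomputable section

/-! Discrimination setting (Section 5.2 of the paper): `K = 2`, prior means `0`,
prior variances `Σ⁰₁ = Σ⁰₂ = 1`, budget `T = 1`.  For discrimination level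
`δ ∈ (0,1)` the politician's weights are `((1+δ)/2, (1−δ)/2)`; for partiality
level `p ∈ [0,1)` the advisor's weights are `((1−p)/2, (1+p)/2)`.

* `ah1 p δ, ah2 p δ` are the auxiliary weights `α̂₁(p,δ), α̂₂(p,δ)`.
* `tau2aux p δ` is `τ₂^aux(p,δ)` and `tau2star p δ = min{τ₂^aux(p,δ), 1}` is the
  advisor's equilibrium allocation of tests to group 2 (group 1 gets the rest).
* `omega τ₂ δ` is utilitarian welfare as a function of the allocation, and
  `W p δ = ω(τ₂*(p,δ), δ)` is equilibrium welfare.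
* `Dlt τ₂ δ` is the difference of the two groups' ex ante expected utilities and
  `Ineq p δ = |Δ(τ₂*(p,δ), δ)|` is equilibrium inequality. -/

/-- Auxiliary weight `α̂₁(p,δ)`. -/
def ah1 (p δ : ℝ) : ℝ :=
  if p < (1 - δ) / 2 then (1 / 2) * Real.sqrt ((1 + δ) * (1 - 2 * p - δ)) else 0

/-- Auxiliary weight `α̂₂(p,δ)`. -/
def ah2 (p δ : ℝ) : ℝ := (1 / 2) * Real.sqrt ((1 - δ) * (1 + 2 * p + δ))

/-- `τ₂^aux(p,δ)`. -/
def tau2aux (p δ : ℝ) : ℝ := (2 * ah2 p δ - ah1 p δ) / (ah1 p δ + ah2 p δ)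

/-- The advisor's equilibrium allocation of tests to group 2, `τ₂*(p,δ)`. -/
def tau2star (p δ : ℝ) : ℝ := min (tau2aux p δ) 1

/-- Utilitarian welfare `ω(τ₂, δ)` from splitting the budget as `(1−τ₂, τ₂)`. -/
def omega (τ2 δ : ℝ) : ℝ :=
  -3 - δ ^ 2 + ((1 + δ) ^ 2 / 2 + (1 + δ) * (1 - τ2)) / (2 - τ2)
    + ((1 - δ) ^ 2 / 2 + (1 - δ) * τ2) / (1 + τ2)

/-- Equilibrium welfare `W(p,δ)`. -/
def W (p δ : ℝ) : ℝ := omega (tau2star p δ) δ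

/-- Difference `Δ(τ₂,δ)` of the two groups' ex ante expected utilities. -/
def Dlt (τ2 δ : ℝ) : ℝ :=
  (1 + δ) * (1 - τ2) / (2 - τ2) - (1 - δ) * τ2 / (1 + τ2)

/-- Equilibrium inequality `I(p,δ)`. -/
def Ineq (p δ : ℝ) : ℝ := |Dlt (tau2star p δ) δ|

/-! Write `s = √(1 + 3δ²)`. The partiality `p̂(δ)` is the one for which the advisor's
allocation is `τ₂* = (s - 1 + δ) / (2δ)`, the root in `(0, 1)` of
`2δτ² + 2(1 - δ)τ - (1 + δ) = 0`, i.e. of `Δ(τ, δ) = 0`: both groups are equally well off.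
On the curve `s² = 1 + 3δ²` welfare at that allocation collapses to `-(s + 4) / 3`, while
unchecked discrimination yields `-5/3 - δ²` for `δ ≤ 1/3` and `-7/4 - δ²/4` otherwise;
the two comparisons reduce to `s < s²` and `0 < (2 - s)²`. -/

open Real Set

lemma omega_zero (δ : ℝ) : omega 0 δ = -7 / 4 - δ ^ 2 / 4 := by
  norm_num [omega]
  ring

lemma omega_one_sub_three_mul_div_two {δ : ℝ} (h₁ : δ ≠ 1) (h₂ : δ ≠ -1) :
    omega ((1 - 3 * δ) / 2) δ = -5 / 3 - δ ^ 2 := by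
  have h₁' : 1 - δ ≠ 0 := sub_ne_zero.2 h₁.symm
  have h₂' : 1 + δ ≠ 0 := fun h => h₂ (by linarith)
  unfold omega
  rw [show 2 - (1 - 3 * δ) / 2 = 3 * (1 + δ) / 2 by ring,
    show 1 + (1 - 3 * δ) / 2 = 3 * (1 - δ) / 2 by ring]
  field_simp
  ring

lemma ah1_pos {p δ : ℝ} (hp : p < (1 - δ) / 2) (hδ : -1 < δ) : 0 < ah1 p δ := by
  rw [ah1, if_pos hp]
  have : 0 < (1 + δ) * (1 - 2 * p - δ) := by nlinarith
  positivity

lemma ah1_sq {p δ : ℝ} (hp : p < (1 - δ) / 2) (hδ : -1 ≤ δ) :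
    ah1 p δ ^ 2 = (1 + δ) * (1 - 2 * p - δ) / 4 := by
  rw [ah1, if_pos hp, mul_pow, sq_sqrt (by nlinarith)]
  ring

lemma ah2_nonneg (p δ : ℝ) : 0 ≤ ah2 p δ := by
  unfold ah2
  positivity

lemma ah2_sq {p δ : ℝ} (h : 0 ≤ (1 - δ) * (1 + 2 * p + δ)) :
    ah2 p δ ^ 2 = (1 - δ) * (1 + 2 * p + δ) / 4 := by
  rw [ah2, mul_pow, sq_sqrt h]
  ring

lemma tau2star_eq_of_mul_eq {p δ t : ℝ} (h₁ : 0 < ah1 p δ) (ht : t ≤ 1)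
    (h : ah2 p δ * (2 - t) = ah1 p δ * (1 + t)) : tau2star p δ = t := by
  have htaux : tau2aux p δ = t := by
    rw [tau2aux, div_eq_iff (by linarith [ah2_nonneg p δ])]
    linear_combination h
  rw [tau2star, htaux, min_eq_left ht]

section EqualityRestoring

variable {δ s : ℝ} (hδ : δ ∈ Ioo (0 : ℝ) 1) (hs : s ^ 2 = 1 + 3 * δ ^ 2)
include hδ hs

lemma tau2star_eq_of_sq (hs₀ : 0 < s) :
    tau2star (δ * (1 / s - 1 / 2)) δ = (s - 1 + δ) / (2 * δ) := by
  obtain ⟨hδ₀, hδ₁⟩ := hδ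
  have hs₁ : 1 < s := by nlinarith
  have hsδ : s < 1 + δ := by nlinarith
  have h2δ : 2 * δ < s := by nlinarith
  set t := (s - 1 + δ) / (2 * δ) with ht
  set p := δ * (1 / s - 1 / 2) with hp
  have hp₁ : p < (1 - δ) / 2 := by
    have : δ / s < 1 / 2 := by rw [div_lt_iff₀ hs₀]; linarith
    rw [hp, mul_sub, mul_one_div]
    linarith
  have hp₂ : 0 ≤ (1 - δ) * (1 + 2 * p + δ) := by
    have : 0 < δ / s := by positivity
    rw [hp, mul_sub, mul_one_div]
    nlinarith
  have ht₀ : 0 < t := div_pos (by linarith) (by positivity)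
  have ht₁ : t ≤ 1 := by
    rw [ht, div_le_one (by positivity)]
    linarith
  have ha₁ := ah1_pos hp₁ (by linarith)
  refine tau2star_eq_of_mul_eq ha₁ ht₁ ((sq_eq_sq₀ ?_ ?_).1 ?_)
  · exact mul_nonneg (ah2_nonneg p δ) (by linarith)
  · exact mul_nonneg ha₁.le (by linarith)
  · rw [mul_pow, mul_pow, ah1_sq hp₁ (by linarith), ah2_sq hp₂, ht, hp]
    field_simp
    linear_combination (-4 * δ - 2 * δ * s) * hs

lemma omega_eq_of_sq : omega ((s - 1 + δ) / (2 * δ)) δ = -(s + 4) / 3 := by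
  obtain ⟨hδ₀, hδ₁⟩ := hδ
  have h₁ : 1 + 3 * δ - s ≠ 0 := by nlinarith
  have h₂ : s + 3 * δ - 1 ≠ 0 := by nlinarith
  unfold omega
  rw [show 2 - (s - 1 + δ) / (2 * δ) = (1 + 3 * δ - s) / (2 * δ) by field_simp; ring,
    show 1 + (s - 1 + δ) / (2 * δ) = (s + 3 * δ - 1) / (2 * δ) by field_simp; ring]
  field_simp
  linear_combination (1 - s + 3 * δ ^ 2) * hs

end EqualityRestoring

/-- Part of Proposition 4: welfare with the equality-restoring
advisor `p̂(δ)` strictly exceeds welfare under unchecked discrimination, where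
the unchecked politician allocates `τ̄₂(δ) = max{(1−3δ)/2, 0}` tests to group 2. -/
theorem stmt_15 (δ : ℝ) (hδ : δ ∈ Set.Ioo (0 : ℝ) 1) :
    let phat : ℝ := δ * (1 / Real.sqrt (1 + 3 * δ ^ 2) - 1 / 2)
    let τbar2 : ℝ := max ((1 - 3 * δ) / 2) 0
    omega τbar2 δ < W phat δ := by
  dsimp only
  set s := √(1 + 3 * δ ^ 2)
  have hs₀ : 0 < s := sqrt_pos.2 (by positivity)
  have hs : s ^ 2 = 1 + 3 * δ ^ 2 := sq_sqrt (by positivity)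
  rw [W, tau2star_eq_of_sq hδ hs hs₀, omega_eq_of_sq hδ hs]
  obtain ⟨hδ₀, hδ₁⟩ := hδ
  rcases le_or_gt δ (1 / 3) with hδ' | hδ'
  · have hs₁ : 1 < s := by nlinarith
    rw [max_eq_left (by linarith), omega_one_sub_three_mul_div_two hδ₁.ne (by linarith)]
    nlinarith
  · have hs₂ : s < 2 := by nlinarith
    rw [max_eq_right (by linarith), omega_zero]
    nlinarith [pow_pos (sub_pos.2 hs₂) 2]
end
end

section
/- For every δ ∈ (0,1), the unchecked politician's test allocation to group 2 is farther from the equal split than the equality-restoring allocation: |τ̄₂(δ) − 1/2| > |τ̂₂(δ) − 1/2|, where τ̄₂(δ) := max{(1−3δ)/2, 0} and τ̂₂(δ) := (−(1−δ) + √(1+3δ²))/(2δ). -/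
noncomputable section

/-! Writing `s = √(1 + 3δ²)`, the equalizing allocation sits at distance `(s - 1)/(2δ)` above `1/2`,
while the unchecked allocation sits at distance `min(3δ, 1)/2` below it. The claim thus reduces to
`s < 1 + min(3δ², δ)`: the bound `s < 1 + 3δ²` is `√x < x` for `x > 1`, and `s < 1 + δ` squares
to `3δ² < 2δ + δ²`, i.e. `δ < 1`. -/

theorem abs_max_sub_half_eq_min {δ : ℝ} (hδ : 0 ≤ δ) :
    |max ((1 - 3 * δ) / 2) 0 - 1 / 2| = min (3 * δ) 1 / 2 := by
  rcases le_total (3 * δ) 1 with h | h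
  · rw [max_eq_left (by linarith), min_eq_left h, abs_of_nonpos (by linarith)]
    ring
  · rw [max_eq_right (by linarith), min_eq_right h]
    norm_num

theorem neg_one_sub_add_div_two_mul_sub_half {δ : ℝ} (hδ : δ ≠ 0) (s : ℝ) :
    (-(1 - δ) + s) / (2 * δ) - 1 / 2 = (s - 1) / (2 * δ) := by
  field_simp
  ring

theorem sqrt_one_add_three_mul_sq_lt {δ : ℝ} (h0 : 0 < δ) (h1 : δ < 1) :
    √(1 + 3 * δ ^ 2) < 1 + δ * min (3 * δ) 1 := by
  rcases min_cases (3 * δ) 1 with ⟨h, -⟩ | ⟨h, -⟩ <;> rw [h]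
  · have : √(1 + 3 * δ ^ 2) < 1 + 3 * δ ^ 2 :=
      Real.sqrt_lt_self_iff.2 (lt_add_of_pos_right _ (by positivity))
    linarith
  · exact (Real.sqrt_lt' (by positivity)).2 (by nlinarith)

/-- Lemma 8 of the paper.  The unchecked politician's allocation
to group 2, `τ̄₂(δ) = max{(1−3δ)/2, 0}`, is farther from the equal split `1/2`
than the equality-restoring allocation `τ̂₂(δ) = (−(1−δ) + √(1+3δ²))/(2δ)`. -/
theorem stmt_17 (δ : ℝ) (hδ : δ ∈ Set.Ioo (0 : ℝ) 1) :
    |max ((1 - 3 * δ) / 2) 0 - 1 / 2| >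
      |(-(1 - δ) + Real.sqrt (1 + 3 * δ ^ 2)) / (2 * δ) - 1 / 2| := by
  obtain ⟨h0, h1⟩ := hδ
  have hsqrt := sqrt_one_add_three_mul_sq_lt h0 h1
  have hsqrt_ge : 1 ≤ √(1 + 3 * δ ^ 2) := Real.one_le_sqrt.2 (by nlinarith)
  rw [abs_max_sub_half_eq_min h0.le, neg_one_sub_add_div_two_mul_sub_half h0.ne',
    abs_of_nonneg (div_nonneg (by linarith) (by positivity)), gt_iff_lt,
    div_lt_iff₀ (by positivity)]
  linarith
end
end

section
/- In the changing-preferences setting with initial weights α₁, α₂ > 0, change factor c > 0 with c ≠ 1, and change probability p ∈ (0,1), the following are equivalent: (i) for every budget T > 0, every maximizer τ of the sophisticated agent's reduced objective G_s(τ) := −α₁²/(1+τ₁) − α₂²(1−p+pc(2−c))/(1+τ₂) over {τ ∈ ℝ² : τ₁, τ₂ ≥ 0, τ₁+τ₂ ≤ T} satisfies τ₂ = 0 (strategic ignorance about attribute 2); (ii) √p · (c − 1) ≥ 1. -/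
/-!
Write `K = 1 - p + pc(2 - c) = 1 - (√p (c - 1))²` for the weight of attribute 2 in the reduced
objective `-A/(1 + τ₁) - B/(1 + τ₂)`, with `A = α₁²` and `B = α₂² K`. If `B ≤ 0`, moving all
testing from attribute 2 to attribute 1 strictly increases the objective, so no maximizer tests
attribute 2. If `B > 0`, write `A = a²`, `B = b²`: by the Cauchy–Schwarz (Sedrakyan) inequality
the objective is at most `-(a + b)²/(T + 2)` on the budget set, with equality at the interior point
`τ = (a/b, b/a)` for the budget `T = a/b + b/a`. Finally `K ≤ 0` iff `√p (c - 1) ≥ 1`, because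
`√p |c - 1| < 1` whenever `c < 1`.
-/

noncomputable section

def budgetSet (T : ℝ) : Set (ℝ × ℝ) := {τ | 0 ≤ τ.1 ∧ 0 ≤ τ.2 ∧ τ.1 + τ.2 ≤ T}

def reducedObjective (A B : ℝ) (τ : ℝ × ℝ) : ℝ := -A / (1 + τ.1) - B / (1 + τ.2)

lemma add_sq_div_add_le {u v : ℝ} (hu : 0 < u) (hv : 0 < v) (a b : ℝ) :
    (a + b) ^ 2 / (u + v) ≤ a ^ 2 / u + b ^ 2 / v := by
  rw [div_add_div _ _ hu.ne' hv.ne', div_le_div_iff₀ (by positivity) (by positivity)]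
  nlinarith [sq_nonneg (a * v - b * u), mul_pos hu hv]

section Objective

variable {A B T : ℝ}

lemma reducedObjective_lt_shift_to_fst (hA : 0 < A) (hB : B ≤ 0) {τ : ℝ × ℝ}
    (h₁ : 0 ≤ τ.1) (h₂ : 0 < τ.2) :
    reducedObjective A B τ < reducedObjective A B (τ.1 + τ.2, 0) := by
  have hfst : A / (1 + (τ.1 + τ.2)) < A / (1 + τ.1) :=
    div_lt_div_of_pos_left hA (by linarith) (by linarith)
  have hsnd : B ≤ B / (1 + τ.2) := by
    rw [le_div_iff₀ (by linarith)]
    nlinarith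
  simp only [reducedObjective, neg_div, add_zero, div_one]
  linarith

lemma snd_eq_zero_of_isMaxOn (hA : 0 < A) (hB : B ≤ 0) {τ : ℝ × ℝ} (hτ : τ ∈ budgetSet T)
    (hmax : IsMaxOn (reducedObjective A B) (budgetSet T) τ) : τ.2 = 0 := by
  obtain ⟨h₁, h₂, hT⟩ := hτ
  by_contra hne
  have hshift : ((τ.1 + τ.2, 0) : ℝ × ℝ) ∈ budgetSet T :=
    ⟨by linarith, le_rfl, by simpa using hT⟩
  exact (hmax hshift).not_gt
    (reducedObjective_lt_shift_to_fst hA hB h₁ (lt_of_le_of_ne h₂ (Ne.symm hne)))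

lemma reducedObjective_sq_le {a b : ℝ} {τ : ℝ × ℝ} (hτ : τ ∈ budgetSet T) :
    reducedObjective (a ^ 2) (b ^ 2) τ ≤ -(a + b) ^ 2 / (T + 2) := by
  obtain ⟨h₁, h₂, hT⟩ := hτ
  have hCS := add_sq_div_add_le (u := 1 + τ.1) (v := 1 + τ.2) (by linarith) (by linarith) a b
  have hbudget : (a + b) ^ 2 / (T + 2) ≤ (a + b) ^ 2 / (1 + τ.1 + (1 + τ.2)) :=
    div_le_div_of_nonneg_left (sq_nonneg _) (by linarith) (by linarith)
  simp only [reducedObjective, neg_div]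
  linarith

lemma reducedObjective_sq_balanced {a b : ℝ} (ha : 0 < a) (hb : 0 < b) :
    reducedObjective (a ^ 2) (b ^ 2) (a / b, b / a) = -(a + b) ^ 2 / (a / b + b / a + 2) := by
  simp only [reducedObjective]
  field_simp
  ring

lemma exists_isMaxOn_snd_pos (hA : 0 < A) (hB : 0 < B) :
    ∃ T > 0, ∃ τ ∈ budgetSet T, IsMaxOn (reducedObjective A B) (budgetSet T) τ ∧ 0 < τ.2 := by
  obtain ⟨a, ha, rfl⟩ : ∃ a > 0, a ^ 2 = A := ⟨√A, Real.sqrt_pos.2 hA, Real.sq_sqrt hA.le⟩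
  obtain ⟨b, hb, rfl⟩ : ∃ b > 0, b ^ 2 = B := ⟨√B, Real.sqrt_pos.2 hB, Real.sq_sqrt hB.le⟩
  refine ⟨a / b + b / a, by positivity, (a / b, b / a), ⟨by positivity, by positivity, le_rfl⟩,
    fun τ hτ => ?_, by positivity⟩
  rw [Set.mem_ofPred_eq, reducedObjective_sq_balanced ha hb]
  exact reducedObjective_sq_le hτ

theorem forall_isMaxOn_snd_eq_zero_iff (hA : 0 < A) :
    (∀ T > 0, ∀ τ ∈ budgetSet T, IsMaxOn (reducedObjective A B) (budgetSet T) τ → τ.2 = 0) ↔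
      B ≤ 0 := by
  refine ⟨fun h => ?_, fun hB T _ τ hτ hmax => snd_eq_zero_of_isMaxOn hA hB hτ hmax⟩
  by_contra! hB
  obtain ⟨T, hT, τ, hτ, hmax, hpos⟩ := exists_isMaxOn_snd_pos hA hB
  exact hpos.ne' (h T hT τ hτ hmax)

end Objective

lemma one_sub_add_mul_nonpos_iff {c p : ℝ} (hc : 0 < c) (hp : p ∈ Set.Ioo (0 : ℝ) 1) :
    1 - p + p * c * (2 - c) ≤ 0 ↔ 1 ≤ √p * (c - 1) := by
  obtain ⟨hp₀, hp₁⟩ := hp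
  have hsqrt : √p ^ 2 = p := Real.sq_sqrt hp₀.le
  have hsqrt_lt : √p < 1 := (Real.sqrt_lt' one_pos).2 (by rwa [one_pow])
  have hK : 1 - p + p * c * (2 - c) = 1 - (√p * (c - 1)) ^ 2 := by
    rw [mul_pow, hsqrt]
    ring
  rw [hK, sub_nonpos, one_le_sq_iff_one_le_abs, abs_mul, abs_of_nonneg (Real.sqrt_nonneg p)]
  constructor
  · intro h
    rcases le_or_gt c 1 with hc1 | hc1
    · nlinarith [abs_of_nonpos (sub_nonpos.2 hc1), Real.sqrt_nonneg p]
    · rwa [abs_of_pos (sub_pos.2 hc1)] at h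
  · intro h
    exact h.trans (mul_le_mul_of_nonneg_left (le_abs_self _) (Real.sqrt_nonneg p))

theorem stmt_18_general (a1 a2 c p : ℝ)
    (ha1 : 0 < a1) (ha2 : 0 < a2) (hc : 0 < c)
    (hp : p ∈ Set.Ioo (0 : ℝ) 1) :
    let Gs : ℝ × ℝ → ℝ := fun τ =>
      -(a1 ^ 2) / (1 + τ.1) - a2 ^ 2 * (1 - p + p * c * (2 - c)) / (1 + τ.2)
    ((∀ T : ℝ, 0 < T →
        ∀ τ ∈ {τ : ℝ × ℝ | 0 ≤ τ.1 ∧ 0 ≤ τ.2 ∧ τ.1 + τ.2 ≤ T},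
          (∀ τ' ∈ {τ : ℝ × ℝ | 0 ≤ τ.1 ∧ 0 ≤ τ.2 ∧ τ.1 + τ.2 ≤ T}, Gs τ' ≤ Gs τ) →
          τ.2 = 0)
      ↔ 1 ≤ Real.sqrt p * (c - 1)) := by
  intro Gs
  have hweight : a2 ^ 2 * (1 - p + p * c * (2 - c)) ≤ 0 ↔ 1 - p + p * c * (2 - c) ≤ 0 := by
    simpa using mul_le_mul_iff_right₀ (c := 0) (pow_pos ha2 2)
  rw [← one_sub_add_mul_nonpos_iff hc hp, ← hweight,
    ← forall_isMaxOn_snd_eq_zero_iff (pow_pos ha1 2)]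
  simp only [isMaxOn_iff]
  rfl

/-- Proposition 6 of the paper (strategic ignorance in the
changing-preferences setting).  The sophisticated agent's reduced objective is
`G_s(τ) = −α₁²/(1+τ₁) − α₂²(1−p+pc(2−c))/(1+τ₂)`.  The sophisticate avoids
learning about attribute 2 for every budget `T > 0` iff `√p (c−1) ≥ 1`. -/
theorem stmt_18 (a1 a2 c p : ℝ)
    (ha1 : 0 < a1) (ha2 : 0 < a2) (hc : 0 < c) (hc1 : c ≠ 1)
    (hp : p ∈ Set.Ioo (0 : ℝ) 1) :
    let Gs : ℝ × ℝ → ℝ := fun τ =>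
      -(a1 ^ 2) / (1 + τ.1) - a2 ^ 2 * (1 - p + p * c * (2 - c)) / (1 + τ.2)
    ((∀ T : ℝ, 0 < T →
        ∀ τ ∈ {τ : ℝ × ℝ | 0 ≤ τ.1 ∧ 0 ≤ τ.2 ∧ τ.1 + τ.2 ≤ T},
          (∀ τ' ∈ {τ : ℝ × ℝ | 0 ≤ τ.1 ∧ 0 ≤ τ.2 ∧ τ.1 + τ.2 ≤ T}, Gs τ' ≤ Gs τ) →
          τ.2 = 0)
      ↔ 1 ≤ Real.sqrt p * (c - 1)) :=
  stmt_18_general a1 a2 c p ha1 ha2 hc hp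
end
end
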